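/- Let A ∈ SL₂(ℝ) with A·i ≠ i, and let H_i(A) = {z ∈ ℍ : d_ℍ(z, i) ≤ d_ℍ(z, A·i)} be the closed half-plane of points at least as close to i as to A·i. Then the open hyperbolic ball of center i and radius log ν(‖A‖) is contained in H_i(A), where ν(a) = √((a² + √(a⁴ − 4))/2). -/

import Mathlib

/-!
The Frobenius norm of `A ∈ SL₂(ℝ)` measures how far `A` moves `i`: `‖A‖² = 2 cosh d(i, A·i)`.
Substituting this into `ν` gives `ν(‖A‖) = e^{d(i, A·i)/2}`, so the ball in question is the ball
of radius `d(i, A·i)/2` about `i`, and by the triangle inequality every point of it is closer to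
`i` than to `A·i`.
-/

open UpperHalfPlane

/-- The Frobenius norm of a real 2×2 matrix: `‖A‖ = √(tr(AᵀA))`. -/
noncomputable def frobNorm (A : Matrix (Fin 2) (Fin 2) ℝ) : ℝ :=
  Real.sqrt (Matrix.trace (A.transpose * A))

/-- The function `ν(a) = √((a² + √(a⁴ − 4))/2)`. -/
noncomputable def nu (a : ℝ) : ℝ := Real.sqrt ((a ^ 2 + Real.sqrt (a ^ 4 - 4)) / 2)

lemma frobNorm_sq (M : Matrix (Fin 2) (Fin 2) ℝ) :
    frobNorm M ^ 2 = M 0 0 ^ 2 + M 0 1 ^ 2 + M 1 0 ^ 2 + M 1 1 ^ 2 := by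
  have htr : (M.transpose * M).trace = M 0 0 ^ 2 + M 0 1 ^ 2 + M 1 0 ^ 2 + M 1 1 ^ 2 := by
    simp only [Matrix.trace_fin_two, Matrix.mul_apply, Matrix.transpose_apply, Fin.sum_univ_two]
    ring
  rw [frobNorm, Real.sq_sqrt (by rw [htr]; positivity), htr]

lemma nu_eq_exp_half {a t : ℝ} (ht : 0 ≤ t) (ha : a ^ 2 = 2 * Real.cosh t) :
    nu a = Real.exp (t / 2) := by
  have hsinh : a ^ 4 - 4 = (2 * Real.sinh t) ^ 2 := by
    nlinarith [Real.cosh_sq_sub_sinh_sq t]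
  have hexp : (2 * Real.cosh t + 2 * Real.sinh t) / 2 = Real.exp (t / 2) ^ 2 := by
    rw [← Real.exp_nat_mul, ← Real.cosh_add_sinh]
    push_cast
    ring_nf
  rw [nu, ha, hsinh, Real.sqrt_sq (by positivity), hexp, Real.sqrt_sq (Real.exp_pos _).le]

lemma Metric.ball_dist_div_two_subset {α : Type*} [PseudoMetricSpace α] (x y : α) :
    Metric.ball x (dist x y / 2) ⊆ {z | dist z x ≤ dist z y} := by
  intro z hz
  have := dist_triangle_left x y z
  rw [Metric.mem_ball] at hz
  exact (by linarith : dist z x ≤ dist z y)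

namespace UpperHalfPlane

variable (A : Matrix.SpecialLinearGroup (Fin 2) ℝ)

lemma re_specialLinearGroup_smul_I :
    (A • I).re = (A 0 0 * A 1 0 + A 0 1 * A 1 1) / (A 1 0 ^ 2 + A 1 1 ^ 2) := by
  rw [← coe_re, coe_specialLinearGroup_apply]
  simp only [Algebra.algebraMap_self, Real.ringHom_apply, coe_I, Complex.div_re, Complex.add_re,
    Complex.mul_re, Complex.ofReal_re, Complex.I_re, mul_zero, Complex.ofReal_im, Complex.I_im,
    mul_one, sub_self, zero_add, Complex.normSq_apply, Complex.add_im, Complex.mul_im, add_zero]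
  ring

lemma im_specialLinearGroup_smul_I : (A • I).im = 1 / (A 1 0 ^ 2 + A 1 1 ^ 2) := by
  rw [← coe_im, coe_specialLinearGroup_apply]
  simp only [Algebra.algebraMap_self, Real.ringHom_apply, coe_I, Complex.div_im, Complex.add_im,
    Complex.mul_im, Complex.ofReal_re, Complex.I_im, mul_one, Complex.ofReal_im, Complex.I_re,
    mul_zero, add_zero, Complex.add_re, Complex.mul_re, sub_self, zero_add, Complex.normSq_apply]
  rw [← sub_div, ← Matrix.det_fin_two, A.2]
  ring

lemma cosh_dist_I_specialLinearGroup_smul_I :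
    Real.cosh (dist I (A • I)) = (A 0 0 ^ 2 + A 0 1 ^ 2 + A 1 0 ^ 2 + A 1 1 ^ 2) / 2 := by
  have hdet : A 0 0 * A 1 1 - A 0 1 * A 1 0 = 1 := by
    rw [← Matrix.det_fin_two]
    exact A.2
  have hS : 0 < A 1 0 ^ 2 + A 1 1 ^ 2 := by
    have := (A • I).im_pos
    rw [im_specialLinearGroup_smul_I] at this
    exact one_div_pos.mp this
  rw [cosh_dist', re_specialLinearGroup_smul_I, im_specialLinearGroup_smul_I, I_re, I_im]
  field_simp
  -- Lagrange's identity `(ac + bd)² + (ad - bc)² = (a² + b²)(c² + d²)` with `ad - bc = 1`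
  linear_combination (-(A 0 0 * A 1 1 - A 0 1 * A 1 0) - 1) * hdet

end UpperHalfPlane

theorem ball_subset_halfPlane_general (A : Matrix.SpecialLinearGroup (Fin 2) ℝ) :
    Metric.ball UpperHalfPlane.I (Real.log (nu (frobNorm A.1))) ⊆
      {z : ℍ | dist z UpperHalfPlane.I ≤ dist z (A • UpperHalfPlane.I)} := by
  have hnu : nu (frobNorm A.1) = Real.exp (dist I (A • I) / 2) := by
    refine nu_eq_exp_half dist_nonneg ?_
    rw [frobNorm_sq, cosh_dist_I_specialLinearGroup_smul_I]
    ring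
  rw [hnu, Real.log_exp]
  exact Metric.ball_dist_div_two_subset _ _

/-- For `A ∈ SL₂(ℝ)` with `A·i ≠ i`, the open hyperbolic ball of center `i` and radius
`log ν(‖A‖)` is contained in the half-plane
`H_i(A) = {z ∈ ℍ : d(z,i) ≤ d(z, A·i)}`. -/
theorem ball_subset_halfPlane (A : Matrix.SpecialLinearGroup (Fin 2) ℝ)
    (hA : A • UpperHalfPlane.I ≠ UpperHalfPlane.I) :
    Metric.ball UpperHalfPlane.I (Real.log (nu (frobNorm A.1))) ⊆
      {z : ℍ | dist z UpperHalfPlane.I ≤ dist z (A • UpperHalfPlane.I)} :=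
  ball_subset_halfPlane_general A
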